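/- For every instance of the rationing problem with an unreserved category split into c_u^1 and c_u^2 and every baseline ordering ≻_π, every matching output by the Smart Reverse Rejecting (SRR) rule is order preserving with respect to c_u^1 and c_u^2: for all agents i, j, (i) if μ(i) ∈ C_p ∪ {c_u^2}, i ≻_{μ(j)} j, and j is eligible for μ(i), then μ(j) ≠ c_u^1; and (ii) if μ(j) ∈ C_p ∪ {c_u^1}, i ≻_{μ(j)} j, and i is eligible for μ(j), then μ(i) ≠ c_u^2. -/

import Mathlib

open scoped Classical

/-- An instance of the rationing problem: a quota for every category and, for every
category `c`, a priority ranking `≿_c`: a total preorder on `N ∪ {∅}`, where we model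
`N ∪ {∅}` as `Option N` with `none` playing the role of `∅`. -/
structure Inst (N C : Type*) where
  quota : C → ℕ
  prio : C → Option N → Option N → Prop
  total : ∀ c x y, prio c x y ∨ prio c y x
  trans : ∀ c x y z, prio c x y → prio c y z → prio c x z

namespace Inst

variable {N C : Type*}

/-- The strict part `≻_c` of the priority ranking `≿_c`. -/
def Strict (I : Inst N C) (c : C) (x y : Option N) : Prop :=
  I.prio c x y ∧ ¬ I.prio c y x

/-- Agent `i` is eligible for category `c` if `i ≻_c ∅`. -/
def Eligible (I : Inst N C) (i : N) (c : C) : Prop :=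
  I.Strict c (some i) none

end Inst

variable {N C : Type*} [Fintype N] [DecidableEq N] [DecidableEq C]

/-- The number of matched agents of (the function) `μ`. -/
def msize (μ : N → Option C) : ℕ :=
  (Finset.univ.filter fun i => μ i ≠ none).card

/-- `μ` satisfies the capacity constraints: every category `c` is matched
to at most `quota c` agents. -/
def Inst.IsMatching (I : Inst N C) (μ : N → Option C) : Prop :=
  ∀ c, (Finset.univ.filter fun i => μ i = some c).card ≤ I.quota c

/-- A baseline ordering `≻_π`, given as a duplicate-free list of all agents,
listed from highest priority to lowest priority; so `i ≻_π j` iff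
`order.idxOf i < order.idxOf j`. -/
def IsBaseline (order : List N) : Prop :=
  order.Nodup ∧ ∀ i : N, i ∈ order

/-- `μ` complies with the eligibility requirements. -/
def Complies (I : Inst N C) (μ : N → Option C) : Prop :=
  ∀ (i : N) (c : C), μ i = some c → I.Eligible i c

/-- The number of agents matched to a preferential category, i.e. a category other than the
unreserved subcategories `cu1` and `cu2`. -/
def beneCount2 (cu1 cu2 : C) (μ : N → Option C) : ℕ :=
  (Finset.univ.filter fun i => μ i ≠ none ∧ μ i ≠ some cu1 ∧ μ i ≠ some cu2).card

/-- `μ` is a matching of the reservation graph of the instance restricted to the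
preferential categories that leaves all agents of `S` unmatched. -/
def PMatch (I : Inst N C) (cu1 cu2 : C) (S : Finset N) (μ : N → Option C) : Prop :=
  I.IsMatching μ ∧ (∀ i ∈ S, μ i = none) ∧
    ∀ (i : N) (c : C), μ i = some c → c ≠ cu1 ∧ c ≠ cu2 ∧ I.Eligible i c

/-- The maximum number of agents of `N \ S` that can simultaneously be matched to
preferential categories. -/
noncomputable def msAvoid (I : Inst N C) (cu1 cu2 : C) (S : Finset N) : ℕ :=
  sSup {k | ∃ μ : N → Option C, PMatch I cu1 cu2 S μ ∧ msize μ = k}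

/-- The set `N_1` of agents receiving an unreserved unit of `c_u^1` under the SRR rule:
considering the agents in order of the baseline ordering from highest to lowest priority,
agent `i` is added to `N_1` if `|N_1| < q_{c_u^1}` and the agents in `N \ (N_1 ∪ {i})` can
still be matched to the preferential categories so as to form a maximum beneficiary
assignment. -/
noncomputable def srrN1 (I : Inst N C) (cu1 cu2 : C) (order : List N) : Finset N :=
  order.foldl
    (fun N1 i =>
      if N1.card < I.quota cu1 ∧
          msAvoid I cu1 cu2 (insert i N1) = msAvoid I cu1 cu2 (∅ : Finset N) then
        insert i N1
      else N1) ∅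

/-- `μ` is a matching of the reduced reservation graph (restricted to the preferential
categories) in which the agents of `N1` are removed and, additionally, all edges `{j,c}`
such that some rejected agent `i ∈ R` has `i ≻_c j` are removed. -/
def PMatchR (I : Inst N C) (cu1 cu2 : C) (N1 R : Finset N) (μ : N → Option C) : Prop :=
  PMatch I cu1 cu2 (N1 ∪ R) μ ∧
    ∀ (i : N) (c : C), μ i = some c → ∀ j ∈ R, ¬ I.Strict c (some j) (some i)

/-- The size of a maximum size matching of the reduced reservation graph (restricted to the
preferential categories, without the agents of `N1`, with rejected set `R`). -/
noncomputable def msR (I : Inst N C) (cu1 cu2 : C) (N1 R : Finset N) : ℕ :=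
  sSup {k | ∃ μ : N → Option C, PMatchR I cu1 cu2 N1 R μ ∧ msize μ = k}

/-- The rejected set of the RR rule run on the agents outside `N1` with the preferential
categories, processing the agents from lowest to highest baseline priority. -/
noncomputable def srrRej (I : Inst N C) (cu1 cu2 : C) (order : List N) (N1 : Finset N) :
    Finset N :=
  (order.filter fun i => decide (i ∉ N1)).foldr
    (fun i R =>
      if msR I cu1 cu2 N1 (insert i R) = msR I cu1 cu2 N1 (∅ : Finset N) then insert i R
      else R) ∅

/-- The final matching of the SRR rule, given the set `N1` of agents matched to `c_u^1` and
the matching `μP` of the remaining agents to the preferential categories: the agents left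
unmatched receive the `q_{c_u^2}` units of `c_u^2` in order of the baseline ordering from
highest to lowest priority. -/
noncomputable def srrFinal (I : Inst N C) (cu1 cu2 : C) (order : List N) (N1 : Finset N)
    (μP : N → Option C) : N → Option C := fun i =>
  if i ∈ N1 then some cu1
  else
    match μP i with
    | some c => some c
    | none =>
      if (Finset.univ.filter fun j =>
            j ∉ N1 ∧ μP j = none ∧ order.idxOf j < order.idxOf i).card <
          I.quota cu2 then
        some cu2
      else none

/-- `μ` is a possible output of the Smart Reverse Rejecting (SRR) rule. -/
def IsSRROutcome (I : Inst N C) (cu1 cu2 : C) (order : List N) (μ : N → Option C) : Prop :=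
  ∃ μP : N → Option C,
    PMatchR I cu1 cu2 (srrN1 I cu1 cu2 order) (srrRej I cu1 cu2 order (srrN1 I cu1 cu2 order))
      μP ∧
    msize μP =
      msR I cu1 cu2 (srrN1 I cu1 cu2 order) (srrRej I cu1 cu2 order (srrN1 I cu1 cu2 order)) ∧
    μ = srrFinal I cu1 cu2 order (srrN1 I cu1 cu2 order) μP

/-! ### Auxiliary lemmas -/

section AuxStrict
variable {N C : Type*}

lemma Inst.strict_trans_left (I : Inst N C) {c : C} {x y z : Option N}
    (h1 : I.prio c x y) (h2 : I.Strict c y z) : I.Strict c x z :=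
  ⟨I.trans c x y z h1 h2.1, fun h => h2.2 (I.trans c z x y h h1)⟩

lemma Inst.strict_trans (I : Inst N C) {c : C} {x y z : Option N}
    (h1 : I.Strict c x y) (h2 : I.Strict c y z) : I.Strict c x z :=
  I.strict_trans_left h1.1 h2

lemma Inst.strict_irrefl (I : Inst N C) {c : C} (x : Option N) : ¬ I.Strict c x x :=
  fun h => h.2 h.1

end AuxStrict

section AuxMain

open Finset

variable {N C : Type*} [Fintype N] [DecidableEq N] [DecidableEq C]

set_option linter.unusedSectionVars false

lemma msize_le_card (μ : N → Option C) : msize μ ≤ Fintype.card N :=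
  le_trans (Finset.card_filter_le _ _) (le_of_eq (Finset.card_univ))

lemma pmatch_none (I : Inst N C) (cu1 cu2 : C) (S : Finset N) :
    PMatch I cu1 cu2 S (fun _ => none) := by
  refine ⟨fun c => ?_, fun i _ => rfl, fun i c h => by simp at h⟩
  simp [Inst.IsMatching]

lemma pmatchR_none (I : Inst N C) (cu1 cu2 : C) (N1 R : Finset N) :
    PMatchR I cu1 cu2 N1 R (fun _ => none) :=
  ⟨pmatch_none I cu1 cu2 _, fun i c h => by simp at h⟩

lemma pmatch_mono (I : Inst N C) (cu1 cu2 : C) {S T : Finset N} (hTS : T ⊆ S)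
    {μ : N → Option C} (h : PMatch I cu1 cu2 S μ) : PMatch I cu1 cu2 T μ :=
  ⟨h.1, fun i hi => h.2.1 i (hTS hi), h.2.2⟩

lemma le_msAvoid (I : Inst N C) (cu1 cu2 : C) (S : Finset N) {μ : N → Option C}
    (h : PMatch I cu1 cu2 S μ) : msize μ ≤ msAvoid I cu1 cu2 S :=
  le_csSup ⟨Fintype.card N, fun k ⟨ν, _, hk⟩ => hk ▸ msize_le_card ν⟩ ⟨μ, h, rfl⟩

lemma msAvoid_le_empty (I : Inst N C) (cu1 cu2 : C) (S : Finset N) :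
    msAvoid I cu1 cu2 S ≤ msAvoid I cu1 cu2 (∅ : Finset N) := by
  refine csSup_le ⟨msize (fun _ => (none : Option C)), fun _ => none, pmatch_none I cu1 cu2 S, rfl⟩
    fun k ⟨μ, h, hk⟩ => ?_
  exact hk ▸ le_msAvoid I cu1 cu2 ∅ (pmatch_mono I cu1 cu2 (Finset.empty_subset S) h)

lemma msAvoid_eq_of_witness (I : Inst N C) (cu1 cu2 : C) (S : Finset N) {ν : N → Option C}
    (hν : PMatch I cu1 cu2 S ν) (hsz : msize ν = msAvoid I cu1 cu2 (∅ : Finset N)) :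
    msAvoid I cu1 cu2 S = msAvoid I cu1 cu2 (∅ : Finset N) :=
  le_antisymm (msAvoid_le_empty I cu1 cu2 S) (hsz ▸ le_msAvoid I cu1 cu2 S hν)

lemma pmatchR_mono (I : Inst N C) (cu1 cu2 : C) (N1 : Finset N) {S T : Finset N} (hTS : T ⊆ S)
    {μ : N → Option C} (h : PMatchR I cu1 cu2 N1 S μ) : PMatchR I cu1 cu2 N1 T μ :=
  ⟨pmatch_mono I cu1 cu2 (Finset.union_subset_union_right hTS) h.1,
    fun i c hc j hj => h.2 i c hc j (hTS hj)⟩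

lemma le_msR (I : Inst N C) (cu1 cu2 : C) (N1 S : Finset N) {μ : N → Option C}
    (h : PMatchR I cu1 cu2 N1 S μ) : msize μ ≤ msR I cu1 cu2 N1 S :=
  le_csSup ⟨Fintype.card N, fun k ⟨ν, _, hk⟩ => hk ▸ msize_le_card ν⟩ ⟨μ, h, rfl⟩

lemma msR_le_empty (I : Inst N C) (cu1 cu2 : C) (N1 S : Finset N) :
    msR I cu1 cu2 N1 S ≤ msR I cu1 cu2 N1 (∅ : Finset N) := by
  refine csSup_le ⟨msize (fun _ => (none : Option C)), fun _ => none,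
    pmatchR_none I cu1 cu2 N1 S, rfl⟩ fun k ⟨μ, h, hk⟩ => ?_
  exact hk ▸ le_msR I cu1 cu2 N1 ∅ (pmatchR_mono I cu1 cu2 N1 (Finset.empty_subset S) h)

lemma msR_empty_eq (I : Inst N C) (cu1 cu2 : C) (N1 : Finset N) :
    msR I cu1 cu2 N1 (∅ : Finset N) = msAvoid I cu1 cu2 N1 := by
  unfold msR msAvoid
  congr 1
  ext k
  constructor
  · rintro ⟨μ, h, hk⟩
    exact ⟨μ, by simpa using h.1, hk⟩
  · rintro ⟨μ, h, hk⟩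
    exact ⟨μ, ⟨by simpa using h, fun i c _ j hj => absurd hj (Finset.notMem_empty j)⟩, hk⟩

end AuxMain
section AuxFold

open Finset

variable {N : Type*} [DecidableEq N]
variable {f : Finset N → N → Finset N} {cond : Finset N → N → Prop}

lemma fold_step_subset (hpos : ∀ s i, cond s i → f s i = insert i s)
    (hneg : ∀ s i, ¬ cond s i → f s i = s) (s : Finset N) (i : N) :
    s ⊆ f s i ∧ f s i ⊆ insert i s := by
  by_cases h : cond s i
  · rw [hpos s i h]; exact ⟨Finset.subset_insert i s, Finset.Subset.refl _⟩
  · rw [hneg s i h]; exact ⟨Finset.Subset.refl _, Finset.subset_insert i s⟩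

lemma fold_mono (hpos : ∀ s i, cond s i → f s i = insert i s)
    (hneg : ∀ s i, ¬ cond s i → f s i = s) :
    ∀ (L : List N) (s : Finset N), s ⊆ L.foldl f s := by
  intro L
  induction L with
  | nil => intro s; exact Finset.Subset.refl _
  | cons a L ih =>
    intro s
    exact Finset.Subset.trans (fold_step_subset hpos hneg s a).1 (ih (f s a))

lemma fold_subset_union (hpos : ∀ s i, cond s i → f s i = insert i s)
    (hneg : ∀ s i, ¬ cond s i → f s i = s) :
    ∀ (L : List N) (s : Finset N), L.foldl f s ⊆ s ∪ L.toFinset := by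
  intro L
  induction L with
  | nil => intro s; simp
  | cons a L ih =>
    intro s
    refine Finset.Subset.trans (ih (f s a)) ?_
    intro x hx
    rcases Finset.mem_union.mp hx with hx | hx
    · have := (fold_step_subset hpos hneg s a).2 hx
      rcases Finset.mem_insert.mp this with rfl | hxs
      · simp
      · exact Finset.mem_union_left _ hxs
    · simp [hx]

lemma fold_reject (hpos : ∀ s i, cond s i → f s i = insert i s)
    (hneg : ∀ s i, ¬ cond s i → f s i = s) :
    ∀ (L : List N) (s : Finset N) (i : N), i ∈ L → i ∉ L.foldl f s →
      ∃ t, s ⊆ t ∧ t ⊆ L.foldl f s ∧ ¬ cond t i := by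
  intro L
  induction L with
  | nil => intro s i hi; exact absurd hi List.not_mem_nil
  | cons a L ih =>
    intro s i hi hfin
    by_cases hai : a = i
    · subst hai
      by_cases hc : cond s a
      · exfalso
        apply hfin
        have h1 : a ∈ f s a := by rw [hpos s a hc]; exact Finset.mem_insert_self a s
        exact fold_mono hpos hneg L (f s a) h1
      · refine ⟨s, Finset.Subset.refl _, ?_, hc⟩
        have : (a :: L).foldl f s = L.foldl f (f s a) := rfl
        rw [this, hneg s a hc]
        exact fold_mono hpos hneg L s
    · have hi' : i ∈ L := by
        rcases List.mem_cons.mp hi with h | h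
        · exact absurd h.symm hai
        · exact h
      obtain ⟨t, h1, h2, h3⟩ := ih (f s a) i hi' hfin
      exact ⟨t, Finset.Subset.trans (fold_step_subset hpos hneg s a).1 h1, h2, h3⟩

lemma fold_inv (hpos : ∀ s i, cond s i → f s i = insert i s)
    (hneg : ∀ s i, ¬ cond s i → f s i = s) (Q : Finset N → Prop)
    (hQ : ∀ s i, cond s i → Q (insert i s)) :
    ∀ (L : List N) (s : Finset N), Q s → Q (L.foldl f s) := by
  intro L
  induction L with
  | nil => intro s hs; exact hs
  | cons a L ih =>
    intro s hs
    refine ih (f s a) ?_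
    by_cases hc : cond s a
    · rw [hpos s a hc]; exact hQ s a hc
    · rw [hneg s a hc]; exact hs

end AuxFold
section AuxSRR

open Finset

variable {N C : Type*} [Fintype N] [DecidableEq N] [DecidableEq C]

variable (I : Inst N C) (cu1 cu2 : C) (order : List N)

private noncomputable def fN1 : Finset N → N → Finset N := fun N1 i =>
  if N1.card < I.quota cu1 ∧
      msAvoid I cu1 cu2 (insert i N1) = msAvoid I cu1 cu2 (∅ : Finset N) then
    insert i N1
  else N1

private def condN1 (s : Finset N) (i : N) : Prop :=
  s.card < I.quota cu1 ∧
    msAvoid I cu1 cu2 (insert i s) = msAvoid I cu1 cu2 (∅ : Finset N)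

lemma fN1_pos : ∀ s i, condN1 I cu1 cu2 s i → fN1 I cu1 cu2 s i = insert i s :=
  fun _ _ h => if_pos h

lemma fN1_neg : ∀ s i, ¬ condN1 I cu1 cu2 s i → fN1 I cu1 cu2 s i = s :=
  fun _ _ h => if_neg h

lemma srrN1_eq_foldl : srrN1 I cu1 cu2 order = order.foldl (fN1 I cu1 cu2) ∅ := rfl

lemma msAvoid_srrN1 :
    msAvoid I cu1 cu2 (srrN1 I cu1 cu2 order) = msAvoid I cu1 cu2 (∅ : Finset N) := by
  rw [srrN1_eq_foldl]
  exact fold_inv (fN1_pos I cu1 cu2) (fN1_neg I cu1 cu2)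
    (fun s => msAvoid I cu1 cu2 s = msAvoid I cu1 cu2 (∅ : Finset N))
    (fun s i h => h.2) order ∅ rfl

lemma srrN1_pair (hb : IsBaseline order) {i j : N}
    (hij : order.idxOf i < order.idxOf j)
    (hjmem : j ∈ srrN1 I cu1 cu2 order) (himem : i ∉ srrN1 I cu1 cu2 order) :
    ∃ s : Finset N, s ⊆ srrN1 I cu1 cu2 order ∧ i ∉ s ∧ j ∉ s ∧
      s.card < I.quota cu1 ∧
      msAvoid I cu1 cu2 (insert i s) ≠ msAvoid I cu1 cu2 (∅ : Finset N) := by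
  have hpos := fN1_pos I cu1 cu2
  have hneg := fN1_neg I cu1 cu2
  set nj := order.idxOf j with hnj
  have hjlen : nj < order.length := List.idxOf_lt_length_iff.mpr (hb.2 j)
  set T := order.take nj with hT
  set L2 := order.drop (nj + 1) with hL2
  have horder : order = T ++ j :: L2 := by
    conv_lhs => rw [← List.take_append_drop nj order]
    rw [List.drop_eq_getElem_cons hjlen, List.getElem_idxOf hjlen]
  have hnodup := hb.1
  rw [horder] at hnodup
  obtain ⟨hndT, hndJ, hdisj⟩ := List.nodup_append'.mp hnodup
  have hjT : j ∉ T := fun h => hdisj h List.mem_cons_self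
  have hjL2 : j ∉ L2 := (List.nodup_cons.mp hndJ).1
  have hilen : order.idxOf i < order.length := List.idxOf_lt_length_iff.mpr (hb.2 i)
  have hTlen : T.length = nj := by
    rw [hT, List.length_take]
    exact Nat.min_eq_left hjlen.le
  have hiT : i ∈ T := by
    have h1 : order.idxOf i < T.length := by rw [hTlen]; exact hij
    have h2 : T[order.idxOf i]'h1 ∈ T := List.getElem_mem h1
    rwa [List.getElem_take, List.getElem_idxOf hilen] at h2
  set sT := T.foldl (fN1 I cu1 cu2) ∅ with hsT
  have hfold : srrN1 I cu1 cu2 order = L2.foldl (fN1 I cu1 cu2) (fN1 I cu1 cu2 sT j) := by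
    rw [srrN1_eq_foldl, horder, List.foldl_append, List.foldl_cons]
  have hsTsub : sT ⊆ (∅ : Finset N) ∪ T.toFinset := fold_subset_union hpos hneg T ∅
  have hjsT : j ∉ sT := fun h => by
    rcases Finset.mem_union.mp (hsTsub h) with h' | h'
    · exact absurd h' (Finset.notMem_empty j)
    · exact hjT (List.mem_toFinset.mp h')
  have hcondj : condN1 I cu1 cu2 sT j := by
    by_contra hc
    rw [hneg sT j hc] at hfold
    have := fold_subset_union hpos hneg L2 sT (hfold ▸ hjmem)
    rcases Finset.mem_union.mp this with h' | h'
    · exact hjsT h'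
    · exact hjL2 (List.mem_toFinset.mp h')
  have hsub : sT ⊆ srrN1 I cu1 cu2 order := by
    rw [hfold]
    exact Finset.Subset.trans (fold_step_subset hpos hneg sT j).1
      (fold_mono hpos hneg L2 _)
  have hisT : i ∉ sT := fun h => himem (hsub h)
  obtain ⟨t, h0, htT, hcnd⟩ := fold_reject hpos hneg T ∅ i hiT hisT
  refine ⟨t, Finset.Subset.trans htT hsub, fun h => hisT (htT h), fun h => hjsT (htT h), ?_, ?_⟩
  · exact lt_of_le_of_lt (Finset.card_le_card htT) hcondj.1
  · intro h
    exact hcnd ⟨lt_of_le_of_lt (Finset.card_le_card htT) hcondj.1, h⟩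

/-! RR fold -/

private noncomputable def fRR (N1 : Finset N) : Finset N → N → Finset N := fun R i =>
  if msR I cu1 cu2 N1 (insert i R) = msR I cu1 cu2 N1 (∅ : Finset N) then insert i R else R

private def condRR (N1 : Finset N) (s : Finset N) (i : N) : Prop :=
  msR I cu1 cu2 N1 (insert i s) = msR I cu1 cu2 N1 (∅ : Finset N)

lemma fRR_pos (N1 : Finset N) :
    ∀ s i, condRR I cu1 cu2 N1 s i → fRR I cu1 cu2 N1 s i = insert i s :=
  fun _ _ h => if_pos h

lemma fRR_neg (N1 : Finset N) :
    ∀ s i, ¬ condRR I cu1 cu2 N1 s i → fRR I cu1 cu2 N1 s i = s :=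
  fun _ _ h => if_neg h

lemma srrRej_eq_foldl (N1 : Finset N) :
    srrRej I cu1 cu2 order N1 =
      ((order.filter fun i => decide (i ∉ N1)).reverse).foldl (fRR I cu1 cu2 N1) ∅ :=
  List.foldl_reverse.symm

lemma msR_srrRej (N1 : Finset N) :
    msR I cu1 cu2 N1 (srrRej I cu1 cu2 order N1) = msR I cu1 cu2 N1 (∅ : Finset N) := by
  rw [srrRej_eq_foldl]
  exact fold_inv (fRR_pos I cu1 cu2 N1) (fRR_neg I cu1 cu2 N1)
    (fun s => msR I cu1 cu2 N1 s = msR I cu1 cu2 N1 (∅ : Finset N))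
    (fun s i h => h) _ ∅ rfl

lemma srrRej_reject (N1 : Finset N) {p : N} (hp : p ∈ order) (hpN1 : p ∉ N1)
    (hpR : p ∉ srrRej I cu1 cu2 order N1) :
    ∃ t, t ⊆ srrRej I cu1 cu2 order N1 ∧
      msR I cu1 cu2 N1 (insert p t) ≠ msR I cu1 cu2 N1 (∅ : Finset N) := by
  have hmem : p ∈ (order.filter fun i => decide (i ∉ N1)).reverse := by
    rw [List.mem_reverse, List.mem_filter]
    exact ⟨hp, by simpa using hpN1⟩
  rw [srrRej_eq_foldl] at hpR ⊢
  obtain ⟨t, _, htsub, hcnd⟩ :=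
    fold_reject (fRR_pos I cu1 cu2 N1) (fRR_neg I cu1 cu2 N1) _ ∅ p hmem hpR
  exact ⟨t, htsub, hcnd⟩

end AuxSRR
section AuxSwap

open Finset

variable {N C : Type*} [Fintype N] [DecidableEq N] [DecidableEq C]

/-- The rank of agent `k` in category `c`: the number of agents strictly below `k`. -/
noncomputable def fval (I : Inst N C) (c : C) (k : N) : ℕ :=
  (Finset.univ.filter fun m => I.Strict c (some k) (some m)).card

lemma fval_lt (I : Inst N C) {c : C} {a b : N} (h : I.Strict c (some a) (some b)) :
    fval I c b < fval I c a := by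
  apply Finset.card_lt_card
  rw [Finset.ssubset_iff_of_subset]
  · exact ⟨b, Finset.mem_filter.mpr ⟨Finset.mem_univ b, h⟩,
      fun hb => (I.strict_irrefl (some b)) (Finset.mem_filter.mp hb).2⟩
  · intro m hm
    exact Finset.mem_filter.mpr ⟨Finset.mem_univ m,
      I.strict_trans h (Finset.mem_filter.mp hm).2⟩

lemma fval_le (I : Inst N C) (c : C) (k : N) : fval I c k ≤ Fintype.card N - 1 := by
  have h : (Finset.univ.filter fun m => I.Strict c (some k) (some m)) ⊆ Finset.univ.erase k := by
    intro m hm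
    have hmk : I.Strict c (some k) (some m) := (Finset.mem_filter.mp hm).2
    refine Finset.mem_erase.mpr ⟨fun h => ?_, Finset.mem_univ m⟩
    exact I.strict_irrefl (some k) (h ▸ hmk)
  calc fval I c k ≤ (Finset.univ.erase k).card := Finset.card_le_card h
    _ = Fintype.card N - 1 := by rw [Finset.card_erase_of_mem (Finset.mem_univ k), Finset.card_univ]

/-- Potential function. -/
noncomputable def phi (I : Inst N C) (ν : N → Option C) : ℕ :=
  ∑ k : N, (ν k).elim 0 (fun c => fval I c k)

lemma phi_le (I : Inst N C) (ν : N → Option C) :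
    phi I ν ≤ Fintype.card N * (Fintype.card N - 1) := by
  calc phi I ν ≤ ∑ _k : N, (Fintype.card N - 1) := by
        apply Finset.sum_le_sum
        intro k _
        cases hk : ν k with
        | none => simp
        | some c => simpa using fval_le I c k
    _ = Fintype.card N * (Fintype.card N - 1) := by
        rw [Finset.sum_const, Finset.card_univ, smul_eq_mul]

section Swap

variable {μ : N → Option C} {a b : N} {c : C}

lemma swap_counts (hab : a ≠ b) (ha : μ a = none) (hbm : μ b = some c) (c' : C) :
    (Finset.univ.filter fun k =>
        (if k = a then some c else if k = b then none else μ k) = some c').card =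
      (Finset.univ.filter fun k => μ k = some c').card := by
  by_cases hcc : c' = c
  · rw [hcc]
    have hset : (Finset.univ.filter fun k =>
          (if k = a then some c else if k = b then none else μ k) = some c) =
        insert a ((Finset.univ.filter fun k => μ k = some c).erase b) := by
      ext k
      simp only [Finset.mem_filter, Finset.mem_univ, true_and, Finset.mem_insert,
        Finset.mem_erase]
      by_cases hka : k = a
      · subst hka
        simp
      · by_cases hkb : k = b
        · subst hkb
          rw [if_neg hka, if_pos rfl]
          simp [hka]
        · rw [if_neg hka, if_neg hkb]
          simp [hka, hkb]
    rw [hset]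
    have hbmem : b ∈ Finset.univ.filter fun k => μ k = some c :=
      Finset.mem_filter.mpr ⟨Finset.mem_univ b, hbm⟩
    have hanot : a ∉ (Finset.univ.filter fun k => μ k = some c).erase b := by
      intro h
      have := (Finset.mem_filter.mp (Finset.mem_of_mem_erase h)).2
      rw [ha] at this
      exact nomatch this
    rw [Finset.card_insert_of_notMem hanot, Finset.card_erase_of_mem hbmem]
    have : 1 ≤ (Finset.univ.filter fun k => μ k = some c).card :=
      Finset.card_pos.mpr ⟨b, hbmem⟩
    omega
  · congr 1
    ext k
    simp only [Finset.mem_filter, Finset.mem_univ, true_and]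
    by_cases hka : k = a
    · subst hka
      simp only [if_pos rfl, ha]
      constructor
      · intro h; exact absurd (Option.some.inj h) (fun hh => hcc hh.symm)
      · intro h; simp at h
    · by_cases hkb : k = b
      · subst hkb
        rw [if_neg hka, if_pos rfl, hbm]
        constructor
        · intro h; simp at h
        · intro h; exact absurd (Option.some.inj h) (fun hh => hcc hh.symm)
      · rw [if_neg hka, if_neg hkb]

lemma swap_msize (hab : a ≠ b) (ha : μ a = none) (hbm : μ b = some c) :
    msize (fun k => if k = a then some c else if k = b then none else μ k) = msize μ := by
  unfold msize
  have hset : (Finset.univ.filter fun k =>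
        (if k = a then some c else if k = b then none else μ k) ≠ none) =
      insert a ((Finset.univ.filter fun k => μ k ≠ none).erase b) := by
    ext k
    simp only [Finset.mem_filter, Finset.mem_univ, true_and, Finset.mem_insert,
      Finset.mem_erase]
    by_cases hka : k = a
    · subst hka
      simp
    · by_cases hkb : k = b
      · subst hkb
        rw [if_neg hka, if_pos rfl]
        simp [hka]
      · rw [if_neg hka, if_neg hkb]
        simp [hka, hkb]
  rw [hset]
  have hbmem : b ∈ Finset.univ.filter fun k => μ k ≠ none :=
    Finset.mem_filter.mpr ⟨Finset.mem_univ b, by rw [hbm]; exact fun h => nomatch h⟩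
  have hanot : a ∉ (Finset.univ.filter fun k => μ k ≠ none).erase b := by
    intro h
    exact (Finset.mem_filter.mp (Finset.mem_of_mem_erase h)).2 ha
  rw [Finset.card_insert_of_notMem hanot, Finset.card_erase_of_mem hbmem]
  have : 1 ≤ (Finset.univ.filter fun k => μ k ≠ none).card :=
    Finset.card_pos.mpr ⟨b, hbmem⟩
  omega

lemma phi_swap (I : Inst N C) (hab : a ≠ b) (ha : μ a = none) (hbm : μ b = some c) :
    phi I (fun k => if k = a then some c else if k = b then none else μ k) + fval I c b =
      phi I μ + fval I c a := by
  unfold phi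
  have hbu : b ∈ (Finset.univ : Finset N).erase a := Finset.mem_erase.mpr ⟨Ne.symm hab, Finset.mem_univ b⟩
  have hsplit : ∀ (g : N → ℕ),
      ∑ k : N, g k = g a + (g b + ∑ k ∈ ((Finset.univ : Finset N).erase a).erase b, g k) := by
    intro g
    rw [Finset.add_sum_erase _ g hbu, Finset.add_sum_erase _ g (Finset.mem_univ a)]
  rw [hsplit (fun k =>
        ((if k = a then some c else if k = b then none else μ k)).elim 0 (fun c' => fval I c' k)),
      hsplit (fun k => (μ k).elim 0 (fun c' => fval I c' k))]
  have e1 : (if a = a then some c else if a = b then none else μ a) = some c := if_pos rfl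
  have e2 : (if b = a then some c else if b = b then none else μ b) = none := by
    rw [if_neg (Ne.symm hab), if_pos rfl]
  rw [e1, e2, ha, hbm]
  simp only [Option.elim_none, Option.elim_some]
  have htail : ∑ k ∈ ((Finset.univ : Finset N).erase a).erase b,
      ((if k = a then some c else if k = b then none else μ k).elim 0 (fun c => fval I c k)) =
      ∑ k ∈ ((Finset.univ : Finset N).erase a).erase b, (μ k).elim 0 (fun c => fval I c k) := by
    apply Finset.sum_congr rfl
    intro k hk
    have hk' := Finset.mem_erase.mp hk
    have hkb := hk'.1
    have hka := (Finset.mem_erase.mp hk'.2).1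
    rw [if_neg hka, if_neg hkb]
  rw [htail]
  ring

end Swap

end AuxSwap
section AuxDescent

open Finset

set_option linter.unusedSectionVars false

variable {N C : Type*} [Fintype N] [DecidableEq N] [DecidableEq C]

/-- Key lemma: every agent not removed by the SRR rule (not in `N1` nor rejected) is
matched in every maximum matching of the final reduced reservation graph. -/
lemma rr_descent (I : Inst N C) (cu1 cu2 : C) (order : List N) (hb : IsBaseline order) :
    ∀ (n : ℕ) (ν : N → Option C) (p : N),
      Fintype.card N * Fintype.card N ≤ phi I ν + n →
      PMatchR I cu1 cu2 (srrN1 I cu1 cu2 order)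
        (srrRej I cu1 cu2 order (srrN1 I cu1 cu2 order)) ν →
      msize ν = msR I cu1 cu2 (srrN1 I cu1 cu2 order) (∅ : Finset N) →
      p ∉ srrN1 I cu1 cu2 order →
      p ∉ srrRej I cu1 cu2 order (srrN1 I cu1 cu2 order) →
      ν p = none → False := by
  set N1 := srrN1 I cu1 cu2 order with hN1
  set R := srrRej I cu1 cu2 order N1 with hR
  intro n
  induction n with
  | zero =>
    intro ν p hφ _ _ _ _ _
    have hpos : 0 < Fintype.card N := Fintype.card_pos_iff.mpr ⟨p⟩
    have h1 : phi I ν ≤ Fintype.card N * (Fintype.card N - 1) := phi_le I ν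
    have h2 : Fintype.card N * (Fintype.card N - 1) < Fintype.card N * Fintype.card N :=
      Nat.mul_lt_mul_of_le_of_lt (le_refl _) (Nat.sub_lt hpos one_pos) hpos
    omega
  | succ n ih =>
    intro ν p hφ hν hsz hpN1 hpR hp
    obtain ⟨⟨hmatch, hunm, helig⟩, hedge⟩ := hν
    by_cases hdom : ∃ j c, ν j = some c ∧ I.Strict c (some p) (some j)
    · obtain ⟨j, c, hj, hstr⟩ := hdom
      have hpj : p ≠ j := by
        rintro rfl
        rw [hp] at hj
        exact nomatch hj
      have hjN1R : j ∉ N1 ∪ R := by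
        intro h
        rw [hunm j h] at hj
        exact nomatch hj
      set ν' : N → Option C := fun k => if k = p then some c else if k = j then none else ν k
        with hν'
      have hν'p : ν' p = some c := if_pos rfl
      have hν'j : ν' j = none := by rw [hν']; simp [Ne.symm hpj]
      have heligc := helig j c hj
      have hν'R : PMatchR I cu1 cu2 N1 R ν' := by
        refine ⟨⟨fun c' => ?_, fun k hk => ?_, fun k c' hkc => ?_⟩, fun k c' hkc r hr => ?_⟩
        · rw [hν']
          rw [swap_counts hpj hp hj c']
          exact hmatch c'
        · have hkp : k ≠ p := by rintro rfl; exact (Finset.mem_union.mp hk).elim hpN1 hpR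
          have hkj : k ≠ j := by rintro rfl; exact hjN1R hk
          rw [hν']
          simp only [if_neg hkp, if_neg hkj]
          exact hunm k hk
        · by_cases hkp : k = p
          · subst hkp
            rw [hν'p] at hkc
            obtain rfl := Option.some.inj hkc
            exact ⟨heligc.1, heligc.2.1, I.strict_trans hstr heligc.2.2⟩
          · by_cases hkj : k = j
            · subst hkj
              rw [hν'j] at hkc
              exact nomatch hkc
            · rw [hν'] at hkc
              simp only [if_neg hkp, if_neg hkj] at hkc
              exact helig k c' hkc
        · by_cases hkp : k = p
          · subst hkp
            rw [hν'p] at hkc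
            obtain rfl := Option.some.inj hkc
            intro hst
            exact hedge j c hj r hr (I.strict_trans hst hstr)
          · by_cases hkj : k = j
            · subst hkj
              rw [hν'j] at hkc
              exact nomatch hkc
            · rw [hν'] at hkc
              simp only [if_neg hkp, if_neg hkj] at hkc
              exact hedge k c' hkc r hr
      have hν'sz : msize ν' = msR I cu1 cu2 N1 (∅ : Finset N) := by
        rw [hν', swap_msize hpj hp hj]
        exact hsz
      have hphi : phi I ν' + fval I c j = phi I ν + fval I c p := phi_swap I hpj hp hj
      have hlt : fval I c j < fval I c p := fval_lt I hstr
      have hφ' : Fintype.card N * Fintype.card N ≤ phi I ν' + n := by omega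
      exact ih ν' j hφ' hν'R hν'sz
        (fun h => hjN1R (Finset.mem_union_left _ h))
        (fun h => hjN1R (Finset.mem_union_right _ h)) hν'j
    · push_neg at hdom
      obtain ⟨t, htR, hneq⟩ := srrRej_reject I cu1 cu2 order N1 (hb.2 p) hpN1 hpR
      apply hneq
      apply le_antisymm (msR_le_empty I cu1 cu2 N1 _)
      rw [← hsz]
      apply le_msR
      refine ⟨⟨hmatch, fun k hk => ?_, helig⟩, fun k c hkc r hr => ?_⟩
      · rcases Finset.mem_union.mp hk with hk | hk
        · exact hunm k (Finset.mem_union_left _ hk)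
        · rcases Finset.mem_insert.mp hk with rfl | hk
          · exact hp
          · exact hunm k (Finset.mem_union_right _ (htR hk))
      · rcases Finset.mem_insert.mp hr with rfl | hr
        · exact hdom k c hkc
        · exact hedge k c hkc r (htR hr)

end AuxDescent
/-- Every matching output by the SRR rule is order preserving with respect to
`c_u^1` and `c_u^2`: (i) if `μ(i) ∈ C_p ∪ {c_u^2}`, `i ≻_{μ(j)} j`, and `j` is eligible for
`μ(i)`, then `μ(j) ≠ c_u^1`; and (ii) if `μ(j) ∈ C_p ∪ {c_u^1}`, `i ≻_{μ(j)} j`, and `i` is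
eligible for `μ(j)`, then `μ(i) ≠ c_u^2`. -/
theorem srr_order_preserving (I : Inst N C) (cu1 cu2 : C) (order : List N)
    (μ : N → Option C) (hne : cu1 ≠ cu2) (hb : IsBaseline order)
    (h1E : ∀ i : N, I.Eligible i cu1) (h2E : ∀ i : N, I.Eligible i cu2)
    (h1P : ∀ i j : N, I.Strict cu1 (some i) (some j) ↔ order.idxOf i < order.idxOf j)
    (h2P : ∀ i j : N, I.Strict cu2 (some i) (some j) ↔ order.idxOf i < order.idxOf j)
    (hout : IsSRROutcome I cu1 cu2 order μ) :
    (∀ (i j : N) (ci cj : C), μ i = some ci → μ j = some cj → ci ≠ cu1 →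
        I.Strict cj (some i) (some j) → I.Eligible j ci → cj ≠ cu1) ∧
      ∀ (i j : N) (ci cj : C), μ i = some ci → μ j = some cj → cj ≠ cu2 →
        I.Strict cj (some i) (some j) → I.Eligible i cj → ci ≠ cu2 := by
  obtain ⟨μP, hμ, hsz, hfin⟩ := hout
  set N1 := srrN1 I cu1 cu2 order with hN1
  set R := srrRej I cu1 cu2 order N1 with hR
  have hms : msize μP = msR I cu1 cu2 N1 (∅ : Finset N) := by
    rw [hsz, hR, msR_srrRej]
  have hms2 : msize μP = msAvoid I cu1 cu2 (∅ : Finset N) := by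
    rw [hms, msR_empty_eq, hN1, msAvoid_srrN1]
  have hmem1 : ∀ k ∈ N1, μ k = some cu1 := by
    intro k hk
    rw [hfin]
    unfold srrFinal
    rw [if_pos hk]
  have hchar : ∀ k c, μ k = some c →
      (k ∈ N1 ∧ c = cu1) ∨ (k ∉ N1 ∧ μP k = some c) ∨ (k ∉ N1 ∧ c = cu2 ∧ μP k = none) := by
    intro k c hk
    rw [hfin] at hk
    unfold srrFinal at hk
    by_cases hkN : k ∈ N1
    · rw [if_pos hkN] at hk
      exact Or.inl ⟨hkN, (Option.some.inj hk).symm⟩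
    · rw [if_neg hkN] at hk
      cases hμPk : μP k with
      | some c' =>
        simp only [hμPk] at hk
        exact Or.inr (Or.inl ⟨hkN, hk⟩)
      | none =>
        simp only [hμPk] at hk
        split_ifs at hk with hq
        exact Or.inr (Or.inr ⟨hkN, (Option.some.inj hk).symm, rfl⟩)
  have hcu1mem : ∀ k, μ k = some cu1 → k ∈ N1 := by
    intro k hk
    rcases hchar k cu1 hk with ⟨h1, -⟩ | ⟨-, h2⟩ | ⟨-, h2, -⟩
    · exact h1
    · exact absurd rfl (hμ.1.2.2 k cu1 h2).1
    · exact absurd h2 hne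
  have hcu2none : ∀ k, μ k = some cu2 → k ∉ N1 ∧ μP k = none := by
    intro k hk
    rcases hchar k cu2 hk with ⟨-, h1⟩ | ⟨h2, h3⟩ | ⟨h2, -, h3⟩
    · exact absurd h1.symm hne
    · exact absurd rfl (hμ.1.2.2 k cu2 h3).2.1
    · exact ⟨h2, h3⟩
  have hprefP : ∀ k c, μ k = some c → c ≠ cu1 → c ≠ cu2 → k ∉ N1 ∧ μP k = some c := by
    intro k c hk h1 h2
    rcases hchar k c hk with ⟨-, h⟩ | h | ⟨-, h, -⟩
    · exact absurd h h1
    · exact h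
    · exact absurd h h2
  constructor
  · -- part (i)
    intro i j ci cj hi hj hci hstr heligj hcj
    rw [hcj] at hj hstr
    have hjN1 : j ∈ N1 := hcu1mem j hj
    have hiN1 : i ∉ N1 := by
      intro h
      rw [hmem1 i h] at hi
      exact hci (Option.some.inj hi).symm
    have hidx : order.idxOf i < order.idxOf j := (h1P i j).mp hstr
    obtain ⟨s, hsN1, his, hjs, hcard, hneq⟩ := srrN1_pair I cu1 cu2 order hb hidx hjN1 hiN1
    apply hneq
    by_cases hci2 : ci = cu2
    · rw [hci2] at hi
      obtain ⟨-, hiP⟩ := hcu2none i hi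
      refine msAvoid_eq_of_witness I cu1 cu2 _ ⟨hμ.1.1, ?_, hμ.1.2.2⟩ hms2
      intro k hk
      rcases Finset.mem_insert.mp hk with rfl | hk
      · exact hiP
      · exact hμ.1.2.1 k (Finset.mem_union_left _ (hsN1 hk))
    · obtain ⟨-, hiP⟩ := hprefP i ci hi hci hci2
      have hjP : μP j = none := hμ.1.2.1 j (Finset.mem_union_left _ hjN1)
      have hji : j ≠ i := by
        rintro rfl
        exact lt_irrefl _ hidx
      have hwit : PMatch I cu1 cu2 (insert i s)
          (fun k => if k = j then some ci else if k = i then none else μP k) := by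
        refine ⟨fun c' => ?_, fun k hk => ?_, fun k c' hkc => ?_⟩
        · rw [swap_counts hji hjP hiP c']
          exact hμ.1.1 c'
        · rcases Finset.mem_insert.mp hk with rfl | hk
          · simp [Ne.symm hji]
          · have hkj : k ≠ j := fun h => hjs (h ▸ hk)
            have hki : k ≠ i := fun h => his (h ▸ hk)
            simp only [if_neg hkj, if_neg hki]
            exact hμ.1.2.1 k (Finset.mem_union_left _ (hsN1 hk))
        · simp only at hkc
          by_cases hkj : k = j
          · subst hkj
            rw [if_pos rfl] at hkc
            obtain rfl := Option.some.inj hkc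
            exact ⟨hci, hci2, heligj⟩
          · by_cases hki : k = i
            · subst hki
              rw [if_neg hkj, if_pos rfl] at hkc
              exact nomatch hkc
            · rw [if_neg hkj, if_neg hki] at hkc
              exact hμ.1.2.2 k c' hkc
      refine msAvoid_eq_of_witness I cu1 cu2 _ hwit ?_
      rw [swap_msize hji hjP hiP]
      exact hms2
  · -- part (ii)
    intro i j ci cj hi hj hcj2 hstr heligi hci
    rw [hci] at hi
    obtain ⟨hiN1, hiP⟩ := hcu2none i hi
    by_cases hcj1 : cj = cu1
    · rw [hcj1] at hj hstr
      have hjN1 : j ∈ N1 := hcu1mem j hj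
      have hidx : order.idxOf i < order.idxOf j := (h1P i j).mp hstr
      obtain ⟨s, hsN1, his, hjs, hcard, hneq⟩ := srrN1_pair I cu1 cu2 order hb hidx hjN1 hiN1
      apply hneq
      refine msAvoid_eq_of_witness I cu1 cu2 _ ⟨hμ.1.1, ?_, hμ.1.2.2⟩ hms2
      intro k hk
      rcases Finset.mem_insert.mp hk with rfl | hk
      · exact hiP
      · exact hμ.1.2.1 k (Finset.mem_union_left _ (hsN1 hk))
    · obtain ⟨hjN1, hjP⟩ := hprefP j cj hj hcj1 hcj2
      by_cases hiR : i ∈ R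
      · exact hμ.2 j cj hjP i hiR hstr
      · exact rr_descent I cu1 cu2 order hb (Fintype.card N * Fintype.card N) μP i
          (Nat.le_add_left _ _) hμ hms hiN1 hiR hiP
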